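/- For every α ∈ (0,1), every ε > 0 and every η ≥ 0, ∫_ε^∞ (1 - e^{-ηx}) · (α/Γ(1-α)) (x-ε)^{-α} x^{-1} dx = (α/ε^α) γ(α; ηε) = (α/ε^α) ∫_0^{ηε} e^{-w} w^{α-1} dw. -/

import Mathlib

open Real Set MeasureTheory

lemma aux_shift_integral (α ε s : ℝ) :
    ∫ x in Ioi ε, (x - ε) ^ (-α) * Real.exp (-(s * x))
      = ∫ u in Ioi (0:ℝ), (u) ^ (-α) * Real.exp (-(s * (u + ε))) := by
  rw [← (measurePreserving_add_right volume ε).setIntegral_preimage_emb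
      (measurableEmbedding_addRight ε) (fun x => (x - ε) ^ (-α) * Real.exp (-(s * x))) (Ioi ε)]
  have : (fun x : ℝ => x + ε) ⁻¹' Ioi ε = Ioi 0 := by ext u; simp
  rw [this]
  refine setIntegral_congr_fun measurableSet_Ioi fun u hu => by simp

lemma aux_inner_value {α : ℝ} (hα0 : 0 < α) (hα1 : α < 1) {ε s : ℝ} (hs : 0 < s) :
    ∫ x in Ioi ε, (x - ε) ^ (-α) * Real.exp (-(s * x))
      = Real.exp (-(s * ε)) * ((1 / s) ^ (1 - α) * Real.Gamma (1 - α)) := by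
  rw [aux_shift_integral]
  have h1 : ∀ u ∈ Ioi (0:ℝ), u ^ (-α) * Real.exp (-(s * (u + ε)))
      = Real.exp (-(s * ε)) * (u ^ (1 - α - 1) * Real.exp (-(s * u))) := by
    intro u hu
    rw [show (1 - α - 1) = -α by ring, mul_add, neg_add, Real.exp_add]
    ring
  rw [setIntegral_congr_fun measurableSet_Ioi h1, integral_const_mul,
    integral_rpow_mul_exp_neg_mul_Ioi (by linarith) hs]

lemma aux_inner_integrable {α : ℝ} (hα0 : 0 < α) (hα1 : α < 1) {ε s : ℝ} (hs : 0 < s) :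
    IntegrableOn (fun x => (x - ε) ^ (-α) * Real.exp (-(s * x))) (Ioi ε) := by
  have base : IntegrableOn (fun u : ℝ => u ^ (-α) * Real.exp (-(s * u))) (Ioi 0) := by
    have := integrableOn_rpow_mul_exp_neg_mul_rpow (by linarith : (-1:ℝ) < -α) (zero_lt_one : (0:ℝ) < 1) hs
    simpa [Real.rpow_one, neg_mul] using this
  have mp := (measurePreserving_add_right volume ε).restrict_preimage_emb
      (measurableEmbedding_addRight ε) (Ioi ε)
  have hpre : (fun x : ℝ => x + ε) ⁻¹' Ioi ε = Ioi 0 := by ext u; simp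
  rw [hpre] at mp
  rw [IntegrableOn, ← mp.integrable_comp_emb (measurableEmbedding_addRight ε)]
  have : ((fun x => (x - ε) ^ (-α) * Real.exp (-(s * x))) ∘ (fun u : ℝ => u + ε))
      = fun u : ℝ => Real.exp (-(s * ε)) * (u ^ (-α) * Real.exp (-(s * u))) := by
    funext u
    simp only [Function.comp_apply, add_sub_cancel_right]
    rw [mul_add, neg_add, Real.exp_add]; ring
  rw [this]
  exact base.const_mul _
lemma aux_prod_integrable {α : ℝ} (hα0 : 0 < α) (hα1 : α < 1) {ε η : ℝ} (hε : 0 < ε)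
    (hη : 0 < η) :
    Integrable (fun z : ℝ × ℝ => (z.1 - ε) ^ (-α) * Real.exp (-(z.2 * z.1)))
      ((volume.restrict (Ioi ε)).prod (volume.restrict (Ioo 0 η))) := by
  have hΓ : 0 < Real.Gamma (1 - α) := Real.Gamma_pos_of_pos (by linarith)
  have hmeas : AEStronglyMeasurable (fun z : ℝ × ℝ => (z.1 - ε) ^ (-α) * Real.exp (-(z.2 * z.1)))
      ((volume.restrict (Ioi ε)).prod (volume.restrict (Ioo 0 η))) := by
    apply Measurable.aestronglyMeasurable
    fun_prop
  rw [integrable_prod_iff' hmeas]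
  constructor
  · filter_upwards [self_mem_ae_restrict measurableSet_Ioo] with s hs
    exact aux_inner_integrable hα0 hα1 hs.1
  · have key : ∀ s ∈ Ioo (0:ℝ) η,
        (∫ x in Ioi ε, ‖(x - ε) ^ (-α) * Real.exp (-(s * x))‖)
          = Real.exp (-(s * ε)) * ((1 / s) ^ (1 - α) * Real.Gamma (1 - α)) := by
      intro s hs
      rw [← aux_inner_value hα0 hα1 (ε := ε) hs.1]
      refine setIntegral_congr_fun measurableSet_Ioi fun x hx => ?_
      have h1 : (0:ℝ) ≤ x - ε := by simp at hx; linarith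
      rw [norm_of_nonneg (by positivity)]
    have hbase : IntegrableOn (fun s : ℝ => Real.Gamma (1 - α) * s ^ (α - 1)) (Ioo 0 η) := by
      exact ((intervalIntegral.integrableOn_Ioo_rpow_iff hη).mpr (by linarith)).const_mul _
    have hforme : IntegrableOn
        (fun s : ℝ => Real.exp (-(s * ε)) * ((1 / s) ^ (1 - α) * Real.Gamma (1 - α)))
        (Ioo 0 η) := by
      refine hbase.mono' (Measurable.aestronglyMeasurable (by fun_prop)) ?_
      filter_upwards [self_mem_ae_restrict measurableSet_Ioo] with s hs
      have h1 : (1 / s) ^ (1 - α) = s ^ (α - 1) := by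
        rw [one_div, Real.inv_rpow hs.1.le, ← Real.rpow_neg hs.1.le, neg_sub]
      have hsp : (0:ℝ) ≤ s ^ (α - 1) := (Real.rpow_pos_of_pos hs.1 _).le
      rw [h1, norm_of_nonneg (by positivity)]
      have hexp : Real.exp (-(s * ε)) ≤ 1 := by
        rw [Real.exp_le_one_iff]; nlinarith [hs.1, hε]
      calc Real.exp (-(s * ε)) * (s ^ (α - 1) * Real.Gamma (1 - α))
          ≤ 1 * (s ^ (α - 1) * Real.Gamma (1 - α)) :=
            mul_le_mul_of_nonneg_right hexp (by positivity)
        _ = Real.Gamma (1 - α) * s ^ (α - 1) := by ring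
    exact hforme.congr_fun (fun s hs => (key s hs).symm) measurableSet_Ioo

/-- For `α ∈ (0,1)`, `ε > 0`, `η ≥ 0`, the Lévy–Khintchine integral of the measure with
density `(α/Γ(1-α)) (x-ε)^(-α) x⁻¹` on `(ε,∞)` equals `(α/ε^α) γ(α;ηε)`. -/
theorem laplace_exponent_approximating_subordinator (α : ℝ) (hα : α ∈ Set.Ioo (0:ℝ) 1)
    (ε : ℝ) (hε : 0 < ε) (η : ℝ) (hη : 0 ≤ η) :
    ∫ x in Set.Ioi ε,
        (1 - Real.exp (-η * x)) * (α / Real.Gamma (1 - α)) * (x - ε) ^ (-α) * x⁻¹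
      = (α / ε ^ α) * ∫ w in (0:ℝ)..(η * ε), Real.exp (-w) * w ^ (α - 1) := by
  obtain ⟨hα0, hα1⟩ := hα
  rcases eq_or_lt_of_le hη with rfl | hη'
  · simp
  have hΓ : 0 < Real.Gamma (1 - α) := Real.Gamma_pos_of_pos (by linarith)
  set c := α / Real.Gamma (1 - α) with hc
  have hεα : (0:ℝ) < ε ^ α := Real.rpow_pos_of_pos hε _
  -- Step 1: rewrite the integrand as an inner integral over s
  have hrep : ∀ x ∈ Ioi ε, (1 - Real.exp (-η * x)) * c * (x - ε) ^ (-α) * x⁻¹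
      = ∫ s in Ioo (0:ℝ) η, c * ((x - ε) ^ (-α) * Real.exp (-(s * x))) := by
    intro x hx
    have hx0 : 0 < x := lt_trans hε hx
    have h2 : ∫ s in Ioo (0:ℝ) η, Real.exp (-(s * x)) = (1 - Real.exp (-η * x)) * x⁻¹ := by
      rw [← integral_Ioc_eq_integral_Ioo, ← intervalIntegral.integral_of_le hη]
      have hfun : ∀ s : ℝ, Real.exp (-(s * x)) = Real.exp (s * (-x)) := fun s => by
        rw [mul_neg]
      simp_rw [hfun]
      rw [intervalIntegral.integral_comp_mul_right (fun u => Real.exp u)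
        (neg_ne_zero.mpr hx0.ne')]
      simp only [zero_mul, smul_eq_mul]
      rw [integral_exp, show η * (-x) = -η * x by ring, Real.exp_zero]
      field_simp
      ring
    rw [integral_const_mul, integral_const_mul, h2]
    ring
  rw [setIntegral_congr_fun measurableSet_Ioi hrep]
  -- Step 2: Fubini
  have hint : Integrable
      (Function.uncurry fun x s => c * ((x - ε) ^ (-α) * Real.exp (-(s * x))))
      ((volume.restrict (Ioi ε)).prod (volume.restrict (Ioo 0 η))) := by
    have := (aux_prod_integrable hα0 hα1 hε hη').const_mul c
    exact this
  rw [MeasureTheory.integral_integral_swap hint]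
  -- Step 3: compute the inner x-integral
  have hinner : ∀ s ∈ Ioo (0:ℝ) η,
      (∫ x in Ioi ε, c * ((x - ε) ^ (-α) * Real.exp (-(s * x))))
        = α * (Real.exp (-(s * ε)) * s ^ (α - 1)) := by
    intro s hs
    rw [integral_const_mul, aux_inner_value hα0 hα1 hs.1]
    have h1 : (1 / s) ^ (1 - α) = s ^ (α - 1) := by
      rw [one_div, Real.inv_rpow hs.1.le, ← Real.rpow_neg hs.1.le, neg_sub]
    rw [h1, hc]
    field_simp
  rw [setIntegral_congr_fun measurableSet_Ioo hinner, integral_const_mul]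
  -- Step 4: substitution w = s * ε in the RHS
  have hsub : ∫ w in (0:ℝ)..(η * ε), Real.exp (-w) * w ^ (α - 1)
      = ε ^ α * ∫ s in Ioo (0:ℝ) η, Real.exp (-(s * ε)) * s ^ (α - 1) := by
    have hmr := intervalIntegral.smul_integral_comp_mul_right (a := (0:ℝ)) (b := η)
      (fun w => Real.exp (-w) * w ^ (α - 1)) ε
    rw [zero_mul] at hmr
    rw [← hmr, intervalIntegral.integral_of_le hη, integral_Ioc_eq_integral_Ioo]
    have hcong : ∀ s ∈ Ioo (0:ℝ) η,
        Real.exp (-(s * ε)) * (s * ε) ^ (α - 1)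
          = ε ^ (α - 1) * (Real.exp (-(s * ε)) * s ^ (α - 1)) := by
      intro s hs
      rw [Real.mul_rpow hs.1.le hε.le]
      ring
    rw [setIntegral_congr_fun measurableSet_Ioo hcong, integral_const_mul, smul_eq_mul,
      ← mul_assoc, ← Real.rpow_one_add' hε.le (by intro h; simp at h; linarith)]
    norm_num
  rw [hsub]
  field_simp
  ring
  simp_rw [mul_comm ε]
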